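/- With the Graev-type ultra-norm ‖·‖ on the free Boolean group B(X) over an ultra-metric space (X,d) (extended to X̄ = X ∪ {0} by d(x,0) = max{d(x,x₀),1}), the canonical embedding ι : X → B(X), x ↦ x, is isometric: ‖x + y‖ = d(x,y) for all x,y ∈ X. -/
import Mathlib


/-- The canonical map from `X̄` to the free Boolean group `B(X)` over `X = X̄ \ {z}`,
sending the distinguished point `z` to the zero element. -/
noncomputable def boolEmb {Xb : Type*} [DecidableEq Xb] (z : Xb) (x : Xb) :
    ({ y : Xb // y ≠ z } →₀ ZMod 2) :=
  if h : x = z then 0 else Finsupp.single ⟨x, h⟩ (1 : ZMod 2)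

/-- The `d`-length of a configuration: the maximum of the distances of its pairs. -/
noncomputable def confLength {Xb : Type*} [MetricSpace Xb] (L : List (Xb × Xb)) : ℝ :=
  (L.map fun p => dist p.1 p.2).foldr max 0

/-- The Graev-type ultra-norm: the infimum of the `d`-lengths of the configurations
representing `u`. -/
noncomputable def graevNorm {Xb : Type*} [MetricSpace Xb] [DecidableEq Xb] (z : Xb)
    (u : { y : Xb // y ≠ z } →₀ ZMod 2) : ℝ :=
  sInf {r : ℝ | ∃ L : List (Xb × Xb),
    (L.map fun p => boolEmb z p.1 + boolEmb z p.2).sum = u ∧ r = confLength L}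

section Aux

variable {Xb : Type*} [MetricSpace Xb] [DecidableEq Xb]

lemma confLength_cons (a : Xb × Xb) (L : List (Xb × Xb)) :
    confLength (a :: L) = max (dist a.1 a.2) (confLength L) := by
  simp [confLength]

lemma confLength_nonneg (L : List (Xb × Xb)) : 0 ≤ confLength L := by
  induction L with
  | nil => simp [confLength]
  | cons a L ih =>
      rw [confLength_cons]
      exact le_trans ih (le_max_right _ _)

lemma dist_le_confLength {L : List (Xb × Xb)} {p : Xb × Xb} (hp : p ∈ L) :
    dist p.1 p.2 ≤ confLength L := by
  induction L with
  | nil => simp at hp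
  | cons a L ih =>
      rw [confLength_cons]
      rcases List.mem_cons.1 hp with h | h
      · subst h; exact le_max_left _ _
      · exact le_trans (ih h) (le_max_right _ _)

/-- Key contradiction lemma: if a configuration of length at most `r` represents
`boolEmb z c + boolEmb z e`, with `dist z c > r` and `dist c e > r`, we get `False`. -/
lemma graev_lower_aux
    (hultra : ∀ x y w : Xb, dist x w ≤ max (dist x y) (dist y w))
    (z c e : Xb)
    (L : List (Xb × Xb))
    (hL : (L.map fun p => boolEmb z p.1 + boolEmb z p.2).sum = boolEmb z c + boolEmb z e)
    (r : ℝ) (hr : ∀ p ∈ L, dist p.1 p.2 ≤ r) (hr0 : 0 ≤ r)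
    (hzc : ¬ dist z c ≤ r) (hce' : ¬ dist c e ≤ r) : False := by
  classical
  set G : Xb → ZMod 2 := fun a => if dist a c ≤ r then 1 else 0 with hG
  set T : ({ y : Xb // y ≠ z } →₀ ZMod 2) → ZMod 2 :=
    fun u => u.sum fun w v => G w.val * v with hT
  have Tadd : ∀ u v, T (u + v) = T u + T v := by
    intro u v
    simpa [hT] using
      Finsupp.sum_add_index' (f := u) (g := v)
        (h := fun (w : { y : Xb // y ≠ z }) (v : ZMod 2) => G w.val * v)
        (fun a => mul_zero _) (fun a b₁ b₂ => mul_add _ _ _)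
  have Temb : ∀ a : Xb, T (boolEmb z a) = G a := by
    intro a
    by_cases h : a = z
    · rw [h]
      have h2 : boolEmb z z = 0 := by simp [boolEmb]
      rw [h2, hT]
      show (0 : { y : Xb // y ≠ z } →₀ ZMod 2).sum (fun w v => G w.val * v) = G z
      rw [Finsupp.sum_zero_index]
      exact (if_neg hzc).symm
    · rw [hT]
      show (boolEmb z a).sum (fun w v => G w.val * v) = G a
      rw [boolEmb, dif_neg h, Finsupp.sum_single_index (by simp)]
      simp
  have Tedge : ∀ p : Xb × Xb, dist p.1 p.2 ≤ r → T (boolEmb z p.1 + boolEmb z p.2) = 0 := by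
    rintro ⟨a, b⟩ hab
    have hGab : G a = G b := by
      have h1 : dist a c ≤ r ↔ dist b c ≤ r := by
        constructor <;> intro h
        · exact le_trans (hultra b a c) (max_le (by rwa [dist_comm]) h)
        · exact le_trans (hultra a b c) (max_le hab h)
      simp only [hG]
      exact if_congr h1 rfl rfl
    rw [Tadd, Temb, Temb, hGab]
    have h2 : ∀ v : ZMod 2, v + v = 0 := by decide
    exact h2 _
  have Tsum : ∀ M : List (Xb × Xb), (∀ p ∈ M, dist p.1 p.2 ≤ r) →
      T ((M.map fun p => boolEmb z p.1 + boolEmb z p.2).sum) = 0 := by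
    intro M
    induction M with
    | nil => intro _; simp [hT]
    | cons p M ih =>
        intro h
        rw [List.map_cons, List.sum_cons, Tadd, Tedge p (h p (by simp)),
          ih (fun q hq => h q (by simp [hq])), add_zero]
  have h1 : T (boolEmb z c + boolEmb z e) = 1 := by
    rw [Tadd, Temb, Temb]
    have hGc : G c = 1 := if_pos (by simpa [dist_self] using hr0)
    have hGe : G e = 0 := if_neg (by rwa [dist_comm] at hce')
    rw [hGc, hGe, add_zero]
  have h0 := Tsum L hr
  rw [hL, h1] at h0
  exact one_ne_zero h0

end Aux

/-- With the metric on `X̄ = X ∪ {z}` extending `d` by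
`d(x,z) = max (d x x₀) 1`, the canonical embedding `X → B(X)` is isometric for the
Graev-type ultra-norm: `‖x + y‖ = d(x,y)` for `x, y ∈ X`. -/
theorem graevNorm_isometric_embedding {Xb : Type*} [MetricSpace Xb] [DecidableEq Xb]
    (hultra : ∀ x y w : Xb, dist x w ≤ max (dist x y) (dist y w))
    (z x₀ : Xb) (hx₀ : x₀ ≠ z)
    (hdz : ∀ x : Xb, x ≠ z → dist x z = max (dist x x₀) 1) :
    ∀ x y : Xb, x ≠ z → y ≠ z →
      graevNorm z (boolEmb z x + boolEmb z y) = dist x y := by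
  intro x y hx hy
  set S : Set ℝ := {r : ℝ | ∃ L : List (Xb × Xb),
    (L.map fun p => boolEmb z p.1 + boolEmb z p.2).sum = boolEmb z x + boolEmb z y ∧
      r = confLength L} with hS
  have hmem : dist x y ∈ S := by
    refine ⟨[(x, y)], by simp, ?_⟩
    rw [confLength_cons]
    simp [confLength, max_eq_left dist_nonneg]
  have hlb : ∀ s ∈ S, dist x y ≤ s := by
    rintro s ⟨L, hL, rfl⟩
    by_cases hxy : x = y
    · subst hxy
      simpa [dist_self] using confLength_nonneg L
    · by_contra hlt
      push_neg at hlt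
      set r := confLength L with hr
      have hr0 : 0 ≤ r := confLength_nonneg L
      have hrL : ∀ p ∈ L, dist p.1 p.2 ≤ r := fun p hp => dist_le_confLength hp
      by_cases hzx : dist z x ≤ r
      · -- then dist z y > r, use c = y, e = x
        have hzy : ¬ dist z y ≤ r := by
          intro h
          have : dist x y ≤ max (dist x z) (dist z y) := hultra x z y
          rw [dist_comm x z] at this
          exact absurd (le_trans this (max_le hzx h)) (not_le.2 hlt)
        refine graev_lower_aux hultra z y x L ?_ r hrL hr0 hzy ?_
        · rw [hL, add_comm]
        · rw [dist_comm]; exact not_le.2 hlt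
      · refine graev_lower_aux hultra z x y L hL r hrL hr0 hzx (not_le.2 hlt)
  have hbdd : BddBelow S := ⟨dist x y, hlb⟩
  rw [graevNorm]
  exact le_antisymm (csInf_le hbdd hmem) (le_csInf ⟨_, hmem⟩ hlb)
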